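/- arXiv:2309.17258 — 5 statements merged into one kernel-verified Lean document; each statement's English description precedes it below -/
import Mathlib

section
/- If the continuum hypothesis holds and {A_γ : γ ∈ Γ} is a partition of [0,1] into sets of Lebesgue measure zero, then there exists Δ ⊆ Γ such that ⋃_{γ∈Δ} A_γ is not Lebesgue measurable. -/
open MeasureTheory
open ENNReal

theorem stmt5 (CH : Cardinal.continuum = Cardinal.aleph 1)
    {Γ : Type*} (A : Γ → Set ℝ)
    (hdisj : Pairwise (Function.onFun Disjoint A))
    (hsub : ∀ γ, A γ ⊆ Set.Icc (0 : ℝ) 1)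
    (hcover : ⋃ γ, A γ = Set.Icc (0 : ℝ) 1)
    (hnull : ∀ γ, volume (A γ) = 0) :
    ∃ Δ : Set Γ, ¬ NullMeasurableSet (⋃ γ ∈ Δ, A γ) volume := by
  by_contra hcon
  push_neg at hcon
  classical
  -- W : a type of cardinality ℵ₁ with a well-order whose initial segments are countable
  set W := (Cardinal.aleph.{0} 1).ord.ToType with hWdef
  have hWcard : Cardinal.mk W = Cardinal.aleph 1 := by
    rw [hWdef, Cardinal.mk_toType, Cardinal.card_ord]
  have hIio : ∀ β : W, (Set.Iio β).Countable := fun β =>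
    (Cardinal.countable_iff_lt_aleph_one _).2 (Cardinal.mk_Iio_ord_toType β)
  -- embed ℝ into W (using CH)
  have CH0 : Cardinal.continuum.{0} = Cardinal.aleph.{0} 1 := by
    refine Cardinal.lift_injective ?_
    rw [Cardinal.lift_continuum, Cardinal.lift_aleph, Ordinal.lift_one]
    exact CH
  have hRW : Cardinal.mk ℝ ≤ Cardinal.mk W := by
    rw [Cardinal.mk_real, hWcard, CH0]
  obtain ⟨e⟩ := (Cardinal.le_def _ _).1 hRW
  -- inject the nonempty pieces into W
  set ι : {γ : Γ // (A γ).Nonempty} → W := fun x => e x.2.some with hι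
  have hιinj : Function.Injective ι := by
    intro x y hxy
    have hxy' : x.2.some = y.2.some := e.injective hxy
    by_contra hne
    have hne' : x.1 ≠ y.1 := fun h => hne (Subtype.ext h)
    have hd := hdisj hne'
    have hmem : x.2.some ∈ A y.1 := by rw [hxy']; exact y.2.some_mem
    exact (Set.disjoint_left.1 hd) x.2.some_mem hmem
  -- the set-function m on subsets of W
  set Df : Set W → Set Γ := fun S => {γ : Γ | ∃ h : (A γ).Nonempty, ι ⟨γ, h⟩ ∈ S}
    with hDf
  set B : Set W → Set ℝ := fun S => ⋃ γ ∈ Df S, A γ with hB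
  set m : Set W → ℝ≥0∞ := fun S => volume (B S) with hm
  have hBmeas : ∀ S, NullMeasurableSet (B S) volume := fun S => hcon (Df S)
  have hBmono : ∀ {S T : Set W}, S ⊆ T → B S ⊆ B T := by
    intro S T hST
    apply Set.biUnion_subset_biUnion_left
    rintro γ ⟨h, hmι⟩
    exact ⟨h, hST hmι⟩
  have hmmono : ∀ {S T : Set W}, S ⊆ T → m S ≤ m T := fun h =>
    measure_mono (hBmono h)
  -- m of a countable set is 0
  have hmnull : ∀ S : Set W, S.Countable → m S = 0 := by
    intro S hS
    have hcnt : (Df S).Countable := by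
      haveI := hS.to_subtype
      have hi : Function.Injective
          (fun x : (Df S) => (⟨ι ⟨x.1, x.2.choose⟩, x.2.choose_spec⟩ : S)) := by
        intro x y hxy
        have h1 : ι ⟨x.1, x.2.choose⟩ = ι ⟨y.1, y.2.choose⟩ := congrArg Subtype.val hxy
        have h2 := hιinj h1
        have h3 : x.1 = y.1 :=
          congrArg (fun z : {γ : Γ // (A γ).Nonempty} => z.1) h2
        exact Subtype.ext h3
      exact Set.countable_coe_iff.1 hi.countable
    exact (measure_biUnion_null_iff hcnt).2 fun γ _ => hnull γ
  -- m univ = 1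
  have hBuniv : B Set.univ = Set.Icc (0 : ℝ) 1 := by
    apply Set.Subset.antisymm
    · exact Set.iUnion₂_subset fun γ _ => hsub γ
    · intro x hx
      rw [← hcover] at hx
      obtain ⟨γ, hγ⟩ := Set.mem_iUnion.1 hx
      exact Set.mem_biUnion ⟨⟨x, hγ⟩, trivial⟩ hγ
  have hmuniv : m Set.univ = 1 := by
    show volume (B Set.univ) = 1
    rw [hBuniv, Real.volume_Icc]; norm_num
  -- B commutes with countable unions and binary unions
  have hDun : ∀ (S : ℕ → Set W), Df (⋃ n, S n) = ⋃ n, Df (S n) := by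
    intro S
    ext γ
    simp only [hDf, Set.mem_setOf_eq, Set.mem_iUnion]
    constructor
    · rintro ⟨h, n, hn⟩; exact ⟨n, h, hn⟩
    · rintro ⟨n, h, hn⟩; exact ⟨h, n, hn⟩
  have hBun : ∀ (S : ℕ → Set W), B (⋃ n, S n) = ⋃ n, B (S n) := by
    intro S
    show (⋃ γ ∈ Df (⋃ n, S n), A γ) = ⋃ n, ⋃ γ ∈ Df (S n), A γ
    rw [hDun S, Set.biUnion_iUnion]
  have hBun2 : ∀ (S T : Set W), B (S ∪ T) = B S ∪ B T := by
    intro S T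
    have hD : Df (S ∪ T) = Df S ∪ Df T := by
      ext γ
      simp only [hDf, Set.mem_setOf_eq, Set.mem_union]
      constructor
      · rintro ⟨h, hh | hh⟩
        · exact Or.inl ⟨h, hh⟩
        · exact Or.inr ⟨h, hh⟩
      · rintro (⟨h, hh⟩ | ⟨h, hh⟩)
        · exact ⟨h, Or.inl hh⟩
        · exact ⟨h, Or.inr hh⟩
    show (⋃ γ ∈ Df (S ∪ T), A γ) = (⋃ γ ∈ Df S, A γ) ∪ ⋃ γ ∈ Df T, A γ
    rw [hD, Set.biUnion_union]
  -- disjointness transfers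
  have hBdisj : ∀ {S T : Set W}, Disjoint S T → Disjoint (B S) (B T) := by
    intro S T hST
    rw [Set.disjoint_left]
    rintro x hxS hxT
    obtain ⟨γ, ⟨h, hi⟩, hxγ⟩ := Set.mem_iUnion₂.1 hxS
    obtain ⟨γ', ⟨h', hi'⟩, hxγ'⟩ := Set.mem_iUnion₂.1 hxT
    rcases eq_or_ne γ γ' with rfl | hne
    · exact (Set.disjoint_left.1 hST) hi hi'
    · exact (Set.disjoint_left.1 (hdisj hne)) hxγ hxγ'
  -- countable additivity of m
  have hmadd : ∀ (S : ℕ → Set W), Pairwise (Function.onFun Disjoint S) →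
      m (⋃ n, S n) = ∑' n, m (S n) := by
    intro S hS
    show volume (B (⋃ n, S n)) = ∑' n, volume (B (S n))
    rw [hBun S]
    exact measure_iUnion₀ (fun i j hij => (hBdisj (hS hij)).aedisjoint)
      (fun n => hBmeas _)
  -- Ulam matrix: for each β, an injection of Iio β into ℕ
  have hf : ∀ β : W, ∃ f : (Set.Iio β) → ℕ, Function.Injective f := fun β =>
    Set.countable_iff_exists_injective.1 (hIio β)
  choose f hfinj using hf
  set T : ℕ → W → Set W := fun n α => {β : W | ∃ h : α < β, f β ⟨α, h⟩ = n}
    with hT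
  -- disjointness in α for fixed n
  have hTd1 : ∀ n : ℕ, ∀ α α' : W, α ≠ α' → Disjoint (T n α) (T n α') := by
    intro n α α' hne
    rw [Set.disjoint_left]
    rintro β ⟨h1, hv1⟩ ⟨h2, hv2⟩
    have heq : (⟨α, h1⟩ : Set.Iio β) = ⟨α', h2⟩ := hfinj β (hv1.trans hv2.symm)
    exact hne (congrArg Subtype.val heq)
  -- Step A : for each α some column has positive m
  have hstepA : ∀ α : W, ∃ n : ℕ, m (T n α) ≠ 0 := by
    intro α
    by_contra hall
    push_neg at hall
    have hU : m (⋃ n, T n α) = 0 := by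
      show volume (B (⋃ n, T n α)) = 0
      rw [hBun]
      exact measure_iUnion_null fun n => hall n
    have hIiccnt : (Set.Iic α).Countable := by
      refine ((hIio α).union (Set.countable_singleton α)).mono ?_
      intro x hx
      rcases eq_or_lt_of_le (Set.mem_Iic.1 hx) with h | h
      · exact Or.inr (by simp [h])
      · exact Or.inl h
    have hcov : (Set.Iic α) ∪ (⋃ n, T n α) = Set.univ := by
      ext β
      simp only [Set.mem_union, Set.mem_Iic, Set.mem_iUnion, Set.mem_univ,
        iff_true]
      rcases le_or_gt β α with h | h
      · exact Or.inl h
      · exact Or.inr ⟨f β ⟨α, h⟩, h, rfl⟩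
    have hle : (1 : ℝ≥0∞) ≤ 0 := by
      calc (1 : ℝ≥0∞) = m Set.univ := hmuniv.symm
        _ = volume (B ((Set.Iic α) ∪ (⋃ n, T n α))) := by rw [hcov]
        _ ≤ volume (B (Set.Iic α)) + volume (B (⋃ n, T n α)) := by
            rw [hBun2]; exact measure_union_le _ _
        _ = m (Set.Iic α) + m (⋃ n, T n α) := rfl
        _ = 0 := by rw [hU, hmnull (Set.Iic α) hIiccnt]; simp
    simp at hle
  -- Step B : for fixed n, only finitely many α have m (T n α) ≥ ε
  have hstepB : ∀ (n : ℕ) (ε : ℝ≥0∞), ε ≠ 0 →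
      {α : W | ε ≤ m (T n α)}.Finite := by
    intro n ε hε
    by_contra hinf
    have hinf' : {α : W | ε ≤ m (T n α)}.Infinite := hinf
    obtain g := hinf'.natEmbedding
    have hdisjg : Pairwise (Function.onFun Disjoint (fun i => T n (g i).1)) := by
      intro i j hij
      refine hTd1 n _ _ ?_
      intro hval
      exact hij (g.injective (Subtype.ext hval))
    have h1 : m (⋃ i, T n (g i).1) = ∑' i, m (T n (g i).1) := hmadd _ hdisjg
    have h2 : (∑' _ : ℕ, ε) ≤ ∑' i, m (T n (g i).1) :=
      ENNReal.tsum_le_tsum fun i => (g i).2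
    have h3 : (∑' _ : ℕ, ε) = ⊤ := ENNReal.tsum_const_eq_top_of_ne_zero hε
    have h4 : m (⋃ i, T n (g i).1) ≤ 1 := by
      rw [← hmuniv]; exact hmmono (Set.subset_univ _)
    rw [h1] at h4
    rw [h3] at h2
    exact absurd (h2.trans h4) (by simp)
  -- each column-support is countable
  have hPcnt : ∀ n : ℕ, {α : W | m (T n α) ≠ 0}.Countable := by
    intro n
    have hsub' : {α : W | m (T n α) ≠ 0} ⊆
        ⋃ k : ℕ, {α : W | ((k : ℝ≥0∞))⁻¹ ≤ m (T n α)} := by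
      intro α hα
      obtain ⟨k, hk⟩ := ENNReal.exists_inv_nat_lt hα
      exact Set.mem_iUnion.2 ⟨k, hk.le⟩
    refine Set.Countable.mono hsub' (Set.countable_iUnion fun k => ?_)
    refine (hstepB n ((k : ℝ≥0∞))⁻¹ ?_).countable
    exact ENNReal.inv_ne_zero.2 (ENNReal.natCast_ne_top k)
  -- conclude : W is countable, contradiction
  have hWcnt : (Set.univ : Set W).Countable := by
    refine Set.Countable.mono ?_ (Set.countable_iUnion hPcnt)
    intro α _
    obtain ⟨n, hn⟩ := hstepA α
    exact Set.mem_iUnion.2 ⟨n, hn⟩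
  haveI : Countable W := Set.countable_univ_iff.1 hWcnt
  have hle0 : Cardinal.mk W ≤ Cardinal.aleph0 := Cardinal.mk_le_aleph0
  rw [hWcard] at hle0
  exact absurd hle0 (not_le.2 Cardinal.aleph0_lt_aleph_one)
end

section
/- Let X be a topological space, let {C_α : α ∈ Λ} be a family of pairwise disjoint open sets, and for each α let B_α ⊆ C_α be a meager set. Then ⋃_{α∈Λ} B_α is meager. -/
open Set

lemma nd_union {X : Type*} [TopologicalSpace X] {Λ : Type*}
    (C S : Λ → Set X)
    (hopen : ∀ α, IsOpen (C α))
    (hdisj : Pairwise (Function.onFun Disjoint C))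
    (hsub : ∀ α, S α ⊆ C α)
    (hnd : ∀ α, IsNowhereDense (S α)) :
    IsNowhereDense (⋃ α, S α) := by
  rw [IsNowhereDense, eq_empty_iff_forall_notMem]
  intro x hx
  set T := ⋃ α, S α with hT
  have hU : IsOpen (interior (closure T)) := isOpen_interior
  have hxc : x ∈ closure T := interior_subset hx
  obtain ⟨y, hyU, hyT⟩ : (interior (closure T) ∩ T).Nonempty := by
    rcases mem_closure_iff.mp hxc _ hU hx with ⟨y, hy⟩
    exact ⟨y, hy⟩
  obtain ⟨_, ⟨α, rfl⟩, hyS⟩ := hyT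
  have hsubset : interior (closure T) ∩ C α ⊆ closure (S α) := by
    intro z ⟨hz1, hz2⟩
    have : z ∈ C α ∩ closure T := ⟨hz2, interior_subset hz1⟩
    have h2 := (hopen α).inter_closure this
    refine closure_mono ?_ h2
    rintro w ⟨hw1, _, ⟨β, rfl⟩, hw2⟩
    by_cases h : β = α
    · exact h ▸ hw2
    · exact absurd rfl ((hdisj (Ne.symm h)).ne_of_mem hw1 (hsub β hw2))
  have : y ∈ interior (closure (S α)) :=
    mem_interior.mpr ⟨_, hsubset, hU.inter (hopen α), ⟨hyU, hsub α hyS⟩⟩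
  rw [hnd α] at this
  exact this

theorem stmt6 {X : Type*} [TopologicalSpace X] {Λ : Type*}
    (C : Λ → Set X) (B : Λ → Set X)
    (hopen : ∀ α, IsOpen (C α))
    (hdisj : Pairwise (Function.onFun Disjoint C))
    (hsub : ∀ α, B α ⊆ C α)
    (hmeager : ∀ α, IsMeagre (B α)) :
    IsMeagre (⋃ α, B α) := by
  -- choose, for each α, a ℕ-indexed family of nowhere dense sets covering B α
  have h : ∀ α, ∃ N : ℕ → Set X, (∀ n, IsNowhereDense (N n)) ∧ B α ⊆ ⋃ n, N n := by
    intro α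
    obtain ⟨S, hSnd, hSc, hScov⟩ :=
      isMeagre_iff_countable_union_isNowhereDense.mp (hmeager α)
    have hne : (insert (∅ : Set X) S).Nonempty := insert_nonempty _ _
    obtain ⟨f, hf⟩ := (hSc.insert ∅).exists_eq_range hne
    refine ⟨f, fun n => ?_, ?_⟩
    · have : f n ∈ insert (∅ : Set X) S := hf ▸ mem_range_self n
      rcases this with h | h
      · rw [h]; simp [IsNowhereDense]
      · exact hSnd _ h
    · refine hScov.trans fun x hx => ?_
      obtain ⟨t, ht, hxt⟩ := hx
      have : t ∈ range f := hf ▸ mem_insert_of_mem _ ht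
      obtain ⟨n, rfl⟩ := this
      exact mem_iUnion.mpr ⟨n, hxt⟩
  choose N hNnd hNcov using h
  have key : ∀ n, IsNowhereDense (⋃ α, N α n ∩ C α) := by
    intro n
    exact nd_union C (fun α => N α n ∩ C α) hopen hdisj
      (fun α => inter_subset_right)
      (fun α => by
        have := hNnd α n
        rw [IsNowhereDense, eq_empty_iff_forall_notMem] at this ⊢
        intro x hx
        exact this x (interior_mono (closure_mono inter_subset_left) hx))
  rw [isMeagre_iff_countable_union_isNowhereDense]
  refine ⟨range (fun n => ⋃ α, N α n ∩ C α), ?_, countable_range _, ?_⟩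
  · rintro t ⟨n, rfl⟩; exact key n
  · rintro x ⟨_, ⟨α, rfl⟩, hx⟩
    obtain ⟨_, ⟨n, rfl⟩, hxn⟩ := hNcov α hx
    exact ⟨_, ⟨n, rfl⟩, mem_iUnion.mpr ⟨α, hxn, hsub α hx⟩⟩
end

section
/- Every nonseparable metric space Y admits a decomposition Y = ⋃_{n,k∈ℕ} D_{n,k}, where each D_{n,k} is a union ⋃_ξ D_{n,k}^{(ξ)} of pairwise disjoint Borel sets such that: (i) the union of any subfamily of {D_{n,k}^{(ξ)}}_ξ is Borel, and (ii) every nonempty open subset G of Y can be written as a union of sets D_{n,k}^{(ξ)} contained in G. -/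
/-!
Stone's construction of a σ-disjoint base. Well-order `Y` by `≺` and, for a radius `a`, prune
the ball of radius `a` about each centre `s` to the points lying at distance `> a` from every
earlier centre. For fixed `a` these pruned balls are open and pairwise disjoint. For `x ∈ Y`
and `ρ > 0`, the `≺`-least centre `s` within `ρ` of `x` has every earlier centre at distance
`≥ ρ` from `x`, so `x` lies in the pruned ball about `s` of any radius between `edist x s`
and `ρ`; the countably many radii `n⁻¹ - k⁻¹` therefore already give a base.
-/

open Function Metric Set TopologicalSpace
open scoped ENNReal

theorem ENNReal.exists_sub_inv_nat_mem_Ioo {u v : ℝ≥0∞} (huv : u < v) (hv : v ≠ ∞) :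
    ∃ k : ℕ, v - (k : ℝ≥0∞)⁻¹ ∈ Ioo u v := by
  obtain ⟨k, hk⟩ := ENNReal.exists_inv_nat_lt (tsub_pos_of_lt huv).ne'
  refine ⟨k, lt_tsub_comm.1 hk, ENNReal.sub_lt_self hv (huv.trans_le' bot_le).ne' ?_⟩
  simp

namespace Metric

variable {Y : Type*} [PseudoEMetricSpace Y] (r : Y → Y → Prop)

def prunedBall (a : ℝ≥0∞) (s : Y) : Set Y :=
  eball s a ∩ {x | a < infEDist x {t | r t s}}

variable {r}

theorem isOpen_prunedBall (a : ℝ≥0∞) (s : Y) : IsOpen (prunedBall r a s) :=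
  isOpen_eball.inter <| isOpen_lt continuous_const continuous_infEDist

theorem disjoint_prunedBall_of_rel (a : ℝ≥0∞) {s t : Y} (hts : r t s) :
    Disjoint (prunedBall r a s) (prunedBall r a t) := by
  refine disjoint_left.2 fun x hxs hxt => ?_
  have : infEDist x {t' | r t' s} < a :=
    (infEDist_le_edist_of_mem (s := {t' | r t' s}) hts).trans_lt hxt.1
  exact this.not_gt hxs.2

theorem pairwise_disjoint_prunedBall [Std.Trichotomous r] (a : ℝ≥0∞) :
    Pairwise (Disjoint on (prunedBall r a)) := by
  intro s t hst
  rcases trichotomous_of r s t with hst' | rfl | hts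
  · exact (disjoint_prunedBall_of_rel a hst').symm
  · exact absurd rfl hst
  · exact disjoint_prunedBall_of_rel a hts

theorem exists_edist_lt_le_infEDist [IsWellFounded Y r] (x : Y) {ρ : ℝ≥0∞} (hρ : ρ ≠ 0) :
    ∃ s, edist x s < ρ ∧ ρ ≤ infEDist x {t | r t s} := by
  have wf : WellFounded r := IsWellFounded.wf
  have hne : {t | edist x t < ρ}.Nonempty := ⟨x, by simpa [pos_iff_ne_zero] using hρ⟩
  refine ⟨wf.min _ hne, wf.min_mem _ hne, le_infEDist.2 fun t ht => ?_⟩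
  exact not_lt.1 fun hlt => wf.not_lt_min _ hlt ht

theorem exists_mem_prunedBall_sub_inv_subset_eball [IsWellFounded Y r] (x : Y) {ρ : ℝ≥0∞}
    (hρ : ρ ≠ 0) (hρ_top : ρ ≠ ∞) :
    ∃ s, ∃ k : ℕ, x ∈ prunedBall r (ρ - (k : ℝ≥0∞)⁻¹) s ∧
      prunedBall r (ρ - (k : ℝ≥0∞)⁻¹) s ⊆ eball x (ρ + ρ) := by
  obtain ⟨s, hxs, hs⟩ := exists_edist_lt_le_infEDist (r := r) x hρ
  obtain ⟨k, hk_gt, hk_lt⟩ := ENNReal.exists_sub_inv_nat_mem_Ioo hxs hρ_top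
  refine ⟨s, k, ⟨hk_gt, hk_lt.trans_le hs⟩, ?_⟩
  rw [edist_comm] at hxs
  calc prunedBall r _ s ⊆ eball s ρ := inter_subset_left.trans (eball_subset_eball hk_lt.le)
    _ ⊆ eball x (ρ + ρ) := eball_subset (add_le_add_left hxs.le ρ) (ne_top_of_lt hxs)

theorem isTopologicalBasis_prunedBall [IsWellOrder Y r] :
    IsTopologicalBasis
      {S | ∃ n k : ℕ, S ∈ range (prunedBall r ((n : ℝ≥0∞)⁻¹ - (k : ℝ≥0∞)⁻¹))} := by
  refine isTopologicalBasis_of_isOpen_of_nhds ?_ fun x G hxG hG => ?_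
  · rintro _ ⟨n, k, s, rfl⟩
    exact isOpen_prunedBall _ s
  obtain ⟨δ, hδ, hδG⟩ := EMetric.isOpen_iff.1 hG x hxG
  obtain ⟨n, hn⟩ := ENNReal.exists_inv_nat_lt (ENNReal.half_pos hδ.ne').ne'
  obtain ⟨s, k, hx, hsub⟩ := exists_mem_prunedBall_sub_inv_subset_eball (r := r) x
    (ENNReal.inv_ne_zero.2 (ENNReal.natCast_ne_top n)) (ne_top_of_lt hn)
  have hnδ : (n : ℝ≥0∞)⁻¹ + (n : ℝ≥0∞)⁻¹ ≤ δ :=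
    (ENNReal.add_lt_add hn hn).le.trans_eq (ENNReal.add_halves δ)
  exact ⟨_, ⟨n, k, s, rfl⟩, hx, hsub.trans ((eball_subset_eball hnδ).trans hδG)⟩

end Metric

theorem stmt11_general {Y : Type*} [MetricSpace Y] [MeasurableSpace Y] [BorelSpace Y] :
    ∃ D : ℕ → ℕ → Set (Set Y),
      -- the sets `D n k` decompose `Y`
      (⋃ n, ⋃ k, ⋃₀ D n k) = Set.univ ∧
      -- each family `D n k` consists of pairwise disjoint Borel sets
      (∀ n k, (D n k).PairwiseDisjoint id) ∧
      (∀ n k, ∀ S ∈ D n k, MeasurableSet S) ∧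
      -- (i) any subfamily has Borel union
      (∀ n k, ∀ 𝒮 ⊆ D n k, MeasurableSet (⋃₀ 𝒮)) ∧
      -- (ii) every nonempty open set is the union of the members contained in it
      (∀ G : Set Y, IsOpen G → G.Nonempty →
        G = ⋃₀ {S | (∃ n k, S ∈ D n k) ∧ S ⊆ G}) := by
  set D : ℕ → ℕ → Set (Set Y) := fun n k =>
    range (prunedBall WellOrderingRel ((n : ℝ≥0∞)⁻¹ - (k : ℝ≥0∞)⁻¹))
  have hB : IsTopologicalBasis {S | ∃ n k, S ∈ D n k} := isTopologicalBasis_prunedBall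
  have hD_open : ∀ n k, ∀ S ∈ D n k, IsOpen S := fun n k S hS => hB.isOpen ⟨n, k, hS⟩
  refine ⟨D, ?_, fun n k => (pairwise_disjoint_prunedBall _).range_pairwise,
    fun n k S hS => (hD_open n k S hS).measurableSet,
    fun n k 𝒮 h𝒮 => (isOpen_sUnion fun S hS => hD_open n k S (h𝒮 hS)).measurableSet,
    fun G hG _ => hB.open_eq_sUnion' hG⟩
  refine eq_univ_of_forall fun x => ?_
  obtain ⟨S, ⟨n, k, hS⟩, hxS, -⟩ := hB.exists_subset_of_mem_open (mem_univ x) isOpen_univ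
  exact mem_iUnion₂.2 ⟨n, k, S, hS, hxS⟩

theorem stmt11 {Y : Type*} [MetricSpace Y] [MeasurableSpace Y] [BorelSpace Y]
    (hY : ¬ TopologicalSpace.SeparableSpace Y) :
    ∃ D : ℕ → ℕ → Set (Set Y),
      -- the sets `D n k` decompose `Y`
      (⋃ n, ⋃ k, ⋃₀ D n k) = Set.univ ∧
      -- each family `D n k` consists of pairwise disjoint Borel sets
      (∀ n k, (D n k).PairwiseDisjoint id) ∧
      (∀ n k, ∀ S ∈ D n k, MeasurableSet S) ∧
      -- (i) any subfamily has Borel union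
      (∀ n k, ∀ 𝒮 ⊆ D n k, MeasurableSet (⋃₀ 𝒮)) ∧
      -- (ii) every nonempty open set is the union of the members contained in it
      (∀ G : Set Y, IsOpen G → G.Nonempty →
        G = ⋃₀ {S | (∃ n k, S ∈ D n k) ∧ S ⊆ G}) :=
  stmt11_general
end

section
/- Let {A_α : α ∈ Λ} be a family of pairwise disjoint Marczewski null (s₀) subsets of ℝ whose union is not Marczewski null. Then there exist disjoint sets Λ₀, Λ₁ with Λ = Λ₀ ∪ Λ₁ such that ⋃_{α∈Λ₀} A_α and ⋃_{α∈Λ₁} A_α cannot be separated by a Marczewski measurable (s) set: no s-set E satisfies ⋃_{α∈Λ₀} A_α ⊆ E and E ∩ ⋃_{α∈Λ₁} A_α = ∅. -/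
/-- A set is Marczewski null (`s₀`) if every nonempty perfect set contains a nonempty
perfect subset disjoint from it. -/
def MarczewskiNull (S : Set ℝ) : Prop :=
  ∀ P : Set ℝ, Perfect P → P.Nonempty →
    ∃ Q : Set ℝ, Q ⊆ P ∧ Perfect Q ∧ Q.Nonempty ∧ Q ∩ S = ∅

/-- A set is Marczewski measurable (an `s`-set) if every nonempty perfect set has a
nonempty perfect subset contained in it or disjoint from it. -/
def MarczewskiMeasurable (S : Set ℝ) : Prop :=
  ∀ P : Set ℝ, Perfect P → P.Nonempty →
    ∃ Q : Set ℝ, Q ⊆ P ∧ Perfect Q ∧ Q.Nonempty ∧ (Q ⊆ S ∨ Q ∩ S = ∅)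

/-!
Suppose every subfamily of the `A α` can be separated from the rest by an `s`-set. Then for every
set `Y` of indices, each perfect set has a perfect subset all of whose points of `⋃ α, A α` carry
indices in `Y`, or all outside `Y`. Fix a perfect `P` all of whose perfect subsets meet the union.

If some perfect `C ⊆ P` had no two perfect subsets with disjoint index sets, then for each `Y`
either `Y` or its complement would be "dense" below `C`. Coding the indices met by `C` by binary
sequences and fusing along the bits gives a perfect subset of `C` meeting a single `A α`, which is
impossible as `A α` is `s₀`. So below every perfect subset of `P` there are two perfect sets with
disjoint index sets, and fusion yields a perfect `R ⊆ P` meeting each `A α` in at most one point.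

Every perfect subset of `R` meets the union in continuum many points, while `R` has only continuum
many perfect subsets, so a Bernstein construction splits the union inside `R` into two sets `M₀`,
`M₁` both meeting every perfect subset of `R`. The indices of the points of `M₀` form a subfamily
that no `s`-set separates from the rest.
-/

open Set Function Filter Topology Cardinal CantorScheme PiNat
open scoped ENNReal

universe u

theorem Cardinal.exists_injective_mem {ι X : Type u} (S : ι → Set X)
    (hS : ∀ i, #ι ≤ #(S i)) : ∃ g : ι → X, Injective g ∧ ∀ i, g i ∈ S i := by
  obtain ⟨_, _, hord⟩ := exists_ord_eq_type_lt ι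
  -- with `ι` well-ordered of order type `(#ι).ord`, every proper initial segment has fewer than
  -- `#ι` elements, so a greedy transfinite choice never runs out of fresh points
  have hfresh : ∀ i (h : Iio i → X), ∃ x ∈ S i, x ∉ range h := by
    intro i h
    by_contra! hsub
    exact ((hS i).trans ((mk_le_mk_of_subset hsub).trans mk_range_le)).not_gt
      (mk_Iio_lt i hord)
  choose pick hpick using hfresh
  let g : ι → X := wellFounded_lt.fix fun i ih => pick i fun j => ih j j.2
  have hg : ∀ i, g i = pick i fun j => g j := wellFounded_lt.fix_eq _
  refine ⟨g, fun i j hij => ?_, fun i => hg i ▸ (hpick i _).1⟩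
  by_contra hne
  rcases lt_or_gt_of_ne hne with h | h
  · exact (hpick j fun k => g k).2 ⟨⟨i, h⟩, hij.trans (hg j)⟩
  · exact (hpick i fun k => g k).2 ⟨⟨j, h⟩, hij.symm.trans (hg i)⟩

theorem Real.mk_isClosed_le_continuum : #{s : Set ℝ | IsClosed s} ≤ 𝔠 := by
  have h := MeasurableSpace.cardinal_measurableSet_le_continuum (s := ⋃ a : ℚ, {Iio (a : ℝ)})
    ((countable_iUnion fun _ => countable_singleton _).le_aleph0.trans aleph0_le_continuum)
  rw [← Real.borel_eq_generateFrom_Iio_rat] at h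
  exact (mk_le_mk_of_subset fun s hs => hs.measurableSet).trans h

instance : PerfectSpace (ℕ → Bool) := by
  refine ⟨preperfect_iff_nhds.2 fun x _ U hU => ?_⟩
  have hlim : Tendsto (fun k => update x k (!x k)) atTop (𝓝 x) :=
    tendsto_pi_nhds.2 fun m => tendsto_const_nhds.congr'
      ((eventually_gt_atTop m).mono fun k hk => (update_of_ne hk.ne _ _).symm)
  obtain ⟨k, hk⟩ := (hlim.eventually_mem hU).exists
  exact ⟨_, ⟨hk, mem_univ _⟩, fun h => by simpa using congrFun h k⟩

theorem Continuous.perfect_range {X Y : Type*} [TopologicalSpace X] [TopologicalSpace Y]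
    [CompactSpace X] [PerfectSpace X] [T2Space Y] {f : X → Y} (hf : Continuous f)
    (hinj : Injective f) : Perfect (range f) := by
  refine ⟨(isCompact_range hf).isClosed, ?_⟩
  rintro _ ⟨x, rfl⟩
  simpa [← image_univ] using (PerfectSpace.univ_preperfect x (mem_univ x)).map hf.continuousAt hinj

def perfectSubsets {α : Type*} [TopologicalSpace α] (C : Set α) : Set (Set α) :=
  {Q | Perfect Q ∧ Q.Nonempty ∧ Q ⊆ C}

theorem perfectSubsets_mono {α : Type*} [TopologicalSpace α] {C D : Set α} (h : D ⊆ C) :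
    perfectSubsets D ⊆ perfectSubsets C :=
  fun _ hQ => ⟨hQ.1, hQ.2.1, hQ.2.2.trans h⟩

theorem Perfect.exists_perfect_disjoint_of_not_subset {α : Type*} [TopologicalSpace α]
    [RegularSpace α] {Q Q' : Set α} (hQ : Perfect Q) (hQ' : IsClosed Q') (h : ¬Q ⊆ Q') :
    ∃ D ∈ perfectSubsets Q, Disjoint D Q' := by
  obtain ⟨x, hxQ, hxQ'⟩ := not_subset.1 h
  obtain ⟨V, hV, hVc, hVQ'⟩ := exists_mem_nhds_isClosed_subset (hQ'.isOpen_compl.mem_nhds hxQ')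
  obtain ⟨hD, hDne⟩ :=
    hQ.closure_nhds_inter x hxQ (mem_interior_iff_mem_nhds.2 hV) isOpen_interior
  refine ⟨_, ⟨hD, hDne, closure_minimal inter_subset_right hQ.closed⟩, ?_⟩
  exact subset_compl_iff_disjoint_right.1
    ((closure_mono inter_subset_left).trans ((closure_minimal interior_subset hVc).trans hVQ'))

theorem Perfect.exists_perfect_disjoint_of_mk_lt {α : Type*} [MetricSpace α] [CompleteSpace α]
    {C : Set α} (hC : Perfect C) (hne : C.Nonempty) {Z : Set α} (hZ : #Z < 𝔠) :
    ∃ Q ∈ perfectSubsets C, Disjoint Q Z := by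
  obtain ⟨f, hfC, hf, hfi⟩ := hC.exists_nat_bool_injection hne
  let e : (ℕ → Bool) × (ℕ → Bool) ≃ₜ (ℕ → Bool) :=
    Homeomorph.sumArrowHomeomorphProdArrow.symm.trans
      (Homeomorph.piCongrLeft (Y := fun _ => Bool) Equiv.natSumNatEquivNat)
  -- continuum many pairwise disjoint perfect subsets of `C`
  let K : (ℕ → Bool) → Set α := fun z => range fun w => f (e (z, w))
  have hK : ∀ z, K z ∈ perfectSubsets C := fun z =>
    ⟨(hf.comp (e.continuous.comp (Continuous.prodMk_right z))).perfect_range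
      (hfi.comp (e.injective.comp (Prod.mk_right_injective z))), range_nonempty _,
      (range_comp_subset_range _ f).trans hfC⟩
  by_contra! hmeet
  choose p hpK hpZ using fun z => not_disjoint_iff.1 (hmeet (K z) (hK z))
  have hp : Injective fun z => (⟨p z, hpZ z⟩ : Z) := by
    intro z z' h
    obtain ⟨w, hw⟩ := hpK z
    obtain ⟨w', hw'⟩ := hpK z'
    exact congrArg Prod.fst
      (e.injective (hfi (hw.trans ((congrArg Subtype.val h).trans hw'.symm))))
  have hcard : 𝔠 ≤ #Z := by simpa using lift_mk_le_lift_mk_of_injective hp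
  exact hcard.not_gt hZ

section Fusion

variable {α : Type*} [MetricSpace α] {C : Set α}
  {Rel : ℕ → Set α → Set α → Prop}

theorem exists_small_split
    (hRel : ∀ n D₀ D₁ E₀ E₁, E₀ ⊆ D₀ → E₁ ⊆ D₁ → Rel n D₀ D₁ → Rel n E₀ E₁)
    (hsplit : ∀ n, ∀ D ∈ perfectSubsets C, ∃ D₀ ∈ perfectSubsets D, ∃ D₁ ∈ perfectSubsets D,
      Disjoint D₀ D₁ ∧ Rel n D₀ D₁) (n : ℕ) (D : perfectSubsets C) :
    ∃ c : Bool → perfectSubsets C,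
      (∀ b, (c b : Set α) ⊆ D ∧ Metric.ediam (c b : Set α) ≤ 2⁻¹ ^ n) ∧
      Disjoint (c false : Set α) (c true) ∧ Rel n (c false) (c true) := by
  obtain ⟨D, hD⟩ := D
  obtain ⟨D₀, hD₀, D₁, hD₁, hdisj, hrel⟩ := hsplit n D hD
  have hε : (0 : ℝ≥0∞) < 2⁻¹ ^ n := ENNReal.pow_pos (by norm_num) n
  obtain ⟨E₀, -, ⟨hE₀, hE₀ne, hE₀D, hE₀diam⟩, -, -⟩ := hD₀.1.small_diam_splitting hD₀.2.1 hε
  obtain ⟨E₁, -, ⟨hE₁, hE₁ne, hE₁D, hE₁diam⟩, -, -⟩ := hD₁.1.small_diam_splitting hD₁.2.1 hε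
  refine ⟨fun b => b.rec ⟨E₀, hE₀, hE₀ne, (hE₀D.trans hD₀.2.2).trans hD.2.2⟩
    ⟨E₁, hE₁, hE₁ne, (hE₁D.trans hD₁.2.2).trans hD.2.2⟩, ?_,
    hdisj.mono hE₀D hE₁D, hRel n _ _ _ _ hE₀D hE₁D hrel⟩
  rintro (_ | _)
  exacts [⟨hE₀D.trans hD₀.2.2, hE₀diam⟩, ⟨hE₁D.trans hD₁.2.2, hE₁diam⟩]

variable [CompleteSpace α]

theorem Perfect.exists_cantorScheme (hC : Perfect C) (hne : C.Nonempty)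
    (hRel : ∀ n D₀ D₁ E₀ E₁, E₀ ⊆ D₀ → E₁ ⊆ D₁ → Rel n D₀ D₁ → Rel n E₀ E₁)
    (hsplit : ∀ n, ∀ D ∈ perfectSubsets C, ∃ D₀ ∈ perfectSubsets D, ∃ D₁ ∈ perfectSubsets D,
      Disjoint D₀ D₁ ∧ Rel n D₀ D₁) :
    ∃ (S : List Bool → Set α) (f : (ℕ → Bool) → α), Continuous f ∧ Injective f ∧ S [] = C ∧
      (∀ x n, f x ∈ S (res x n)) ∧ ∀ l, Rel l.length (S (false :: l)) (S (true :: l)) := by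
  choose c hc hcdisj hcrel using exists_small_split hRel hsplit
  let D : List Bool → perfectSubsets C := fun l =>
    l.rec ⟨C, hC, hne, subset_rfl⟩ fun b l S => c l.length S b
  let S : List Bool → Set α := fun l => (D l).1
  have hanti : ClosureAntitone S :=
    Antitone.closureAntitone (fun l b => (hc l.length (D l) b).1) fun l => (D l).2.1.closed
  have hdiam : VanishingDiam S := by
    intro x
    rw [← tendsto_add_atTop_iff_nat 1]
    refine tendsto_of_tendsto_of_tendsto_of_le_of_le tendsto_const_nhds
      (ENNReal.tendsto_pow_atTop_nhds_zero_of_lt_one (r := 2⁻¹) (by norm_num))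
      (fun _ => bot_le) fun n => ?_
    have h : Metric.ediam (S (res x (n + 1))) ≤ 2⁻¹ ^ (res x n).length := (hc _ _ _).2
    rwa [res_length] at h
  have hdisj : CantorScheme.Disjoint S := by
    rintro l (_ | _) (_ | _) hne
    exacts [absurd rfl hne, hcdisj _ _, (hcdisj _ _).symm, absurd rfl hne]
  have hdom : (inducedMap S).1 = Set.univ :=
    hanti.map_of_vanishingDiam hdiam fun l => (D l).2.2.1
  refine ⟨S, fun x => (inducedMap S).2 ⟨x, hdom ▸ mem_univ x⟩,
    hdiam.map_continuous.comp (by fun_prop),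
    fun x y h => congrArg Subtype.val (hdisj.map_injective h), rfl,
    fun x n => map_mem _ n, fun l => hcrel l.length (D l)⟩

theorem Perfect.exists_fusion (hC : Perfect C) (hne : C.Nonempty)
    (hRel : ∀ n D₀ D₁ E₀ E₁, E₀ ⊆ D₀ → E₁ ⊆ D₁ → Rel n D₀ D₁ → Rel n E₀ E₁)
    (hsplit : ∀ n, ∀ D ∈ perfectSubsets C, ∃ D₀ ∈ perfectSubsets D, ∃ D₁ ∈ perfectSubsets D,
      Disjoint D₀ D₁ ∧ Rel n D₀ D₁) :
    ∃ R ∈ perfectSubsets C,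
      (∀ x ∈ R, ∀ n, ∃ D₀ D₁, Rel n D₀ D₁ ∧ (x ∈ D₀ ∨ x ∈ D₁)) ∧
      (∀ x ∈ R, ∀ y ∈ R, x ≠ y →
        ∃ n D₀ D₁, Rel n D₀ D₁ ∧ (x ∈ D₀ ∧ y ∈ D₁ ∨ y ∈ D₀ ∧ x ∈ D₁)) := by
  obtain ⟨S, f, hf, hfi, hS, hfS, hSrel⟩ := hC.exists_cantorScheme hne hRel hsplit
  have hmem : ∀ x n, f x ∈ S (x n :: res x n) := fun x n => hfS x (n + 1)
  have hrel : ∀ x n, Rel n (S (false :: res x n)) (S (true :: res x n)) := fun x n => by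
    simpa only [res_length] using hSrel (res x n)
  refine ⟨range f, ⟨hf.perfect_range hfi, range_nonempty f, ?_⟩, ?_, ?_⟩
  · rintro _ ⟨x, rfl⟩
    exact hS ▸ hfS x 0
  · rintro _ ⟨x, rfl⟩ n
    refine ⟨_, _, hrel x n, ?_⟩
    cases h : x n <;> simp only [← h, hmem, or_true, true_or]
  · rintro _ ⟨x, rfl⟩ _ ⟨y, rfl⟩ hxy
    have hne : x ≠ y := fun h => hxy (h ▸ rfl)
    have hres : res x (firstDiff x y) = res y (firstDiff x y) :=
      res_eq_res.2 fun m hm => apply_eq_of_lt_firstDiff hm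
    have hx := hmem x (firstDiff x y)
    have hy := hmem y (firstDiff x y)
    have hyx : y (firstDiff x y) = !x (firstDiff x y) :=
      Bool.eq_not_of_ne (apply_firstDiff_ne hne).symm
    rw [← hres, hyx] at hy
    refine ⟨_, _, _, hrel x (firstDiff x y), ?_⟩
    cases h : x (firstDiff x y) <;> simp only [h, Bool.not_false, Bool.not_true] at hx hy
    exacts [Or.inl ⟨hx, hy⟩, Or.inr ⟨hy, hx⟩]

end Fusion

def indicesMeeting {Λ X : Type*} (A : Λ → Set X) (D : Set X) : Set Λ :=
  {α | (D ∩ A α).Nonempty}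

theorem indicesMeeting_mono {Λ X : Type*} {A : Λ → Set X} {D D' : Set X} (h : D ⊆ D') :
    indicesMeeting A D ⊆ indicesMeeting A D' :=
  fun _ ⟨x, hxD, hxA⟩ => ⟨x, h hxD, hxA⟩

section Marczewski

variable {Λ : Type*} {A : Λ → Set ℝ}

def PerfectlyDecided (A : Λ → Set ℝ) (Y : Set Λ) : Prop :=
  ∀ D, Perfect D → D.Nonempty →
    ∃ Q ∈ perfectSubsets D, indicesMeeting A Q ⊆ Y ∨ indicesMeeting A Q ⊆ Yᶜ

theorem MarczewskiMeasurable.perfectlyDecided {E : Set ℝ} (hE : MarczewskiMeasurable E)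
    {Y : Set Λ} (hY : ⋃ α ∈ Y, A α ⊆ E) (hYc : E ∩ ⋃ α ∈ Yᶜ, A α = ∅) :
    PerfectlyDecided A Y := by
  intro D hD hne
  obtain ⟨Q, hQD, hQ, hQne, hQE | hQE⟩ := hE D hD hne
  · refine ⟨Q, ⟨hQ, hQne, hQD⟩, Or.inl fun α ⟨x, hxQ, hxA⟩ => ?_⟩
    by_contra hα
    exact notMem_empty x (hYc.subset ⟨hQE hxQ, mem_biUnion hα hxA⟩)
  · refine ⟨Q, ⟨hQ, hQne, hQD⟩, Or.inr fun α ⟨x, hxQ, hxA⟩ hα => ?_⟩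
    exact notMem_empty x (hQE.subset ⟨hxQ, hY (mem_biUnion hα hxA)⟩)

theorem exists_perfect_forall_indicesMeeting_nonempty (hU : ¬MarczewskiNull (⋃ α, A α)) :
    ∃ P, Perfect P ∧ P.Nonempty ∧ ∀ Q ∈ perfectSubsets P, (indicesMeeting A Q).Nonempty := by
  unfold MarczewskiNull at hU
  push Not at hU
  obtain ⟨P, hP, hne, hmeet⟩ := hU
  refine ⟨P, hP, hne, fun Q hQ => ?_⟩
  obtain ⟨x, hxQ, hx⟩ := hmeet Q hQ.2.2 hQ.1 hQ.2.1
  obtain ⟨α, hα⟩ := mem_iUnion.1 hx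
  exact ⟨α, x, hxQ, hα⟩

theorem indicesMeeting_nontrivial (hnull : ∀ α, MarczewskiNull (A α)) {R : Set ℝ}
    (hR : Perfect R) (hne : R.Nonempty)
    (hmeet : ∀ Q ∈ perfectSubsets R, (indicesMeeting A Q).Nonempty) :
    (indicesMeeting A R).Nontrivial := by
  obtain ⟨α, hα⟩ := hmeet R ⟨hR, hne, subset_rfl⟩
  obtain ⟨Q, hQR, hQ, hQne, hQA⟩ := hnull α R hR hne
  obtain ⟨β, hβ⟩ := hmeet Q ⟨hQ, hQne, hQR⟩
  refine ⟨α, hα, β, indicesMeeting_mono hQR hβ, ?_⟩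
  rintro rfl
  exact hβ.ne_empty hQA

def DenselyIndexed (A : Λ → Set ℝ) (C : Set ℝ) (Y : Set Λ) : Prop :=
  ∀ D ∈ perfectSubsets C, ∃ Q ∈ perfectSubsets D, indicesMeeting A Q ⊆ Y

theorem denselyIndexed_or_compl {C : Set ℝ} {Y : Set Λ} (hY : PerfectlyDecided A Y)
    (hlink : ∀ Q ∈ perfectSubsets C, ∀ Q' ∈ perfectSubsets C,
      ¬Disjoint (indicesMeeting A Q) (indicesMeeting A Q')) :
    DenselyIndexed A C Y ∨ DenselyIndexed A C Yᶜ := by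
  by_cases h : DenselyIndexed A C Y
  · exact Or.inl h
  unfold DenselyIndexed at h
  push Not at h
  obtain ⟨D, hD, hbad⟩ := h
  obtain ⟨Q, hQ, hQY | hQY⟩ := hY D hD.1 hD.2.1
  · exact absurd hQY (hbad Q hQ)
  refine Or.inr fun D' hD' => ?_
  obtain ⟨Q', hQ', hQ'Y | hQ'Y⟩ := hY D' hD'.1 hD'.2.1
  · exact absurd (disjoint_compl_left.mono hQY hQ'Y)
      (hlink Q (perfectSubsets_mono hD.2.2 hQ) Q' (perfectSubsets_mono hD'.2.2 hQ'))
  · exact ⟨Q', hQ', hQ'Y⟩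

theorem exists_injOn_indicesMeeting (hdisj : Pairwise (Disjoint on A)) (C : Set ℝ) :
    ∃ code : Λ → ℕ → Bool, InjOn code (indicesMeeting A C) := by
  obtain ⟨j⟩ : Nonempty (ℝ ↪ (ℕ → Bool)) := by
    rw [← Cardinal.le_def]
    simp [mk_real]
  obtain ⟨pt, hpt⟩ : ∃ pt : Λ → ℝ, ∀ α ∈ indicesMeeting A C, pt α ∈ C ∩ A α :=
    ⟨fun α => Classical.epsilon (· ∈ C ∩ A α), fun _ hα => Classical.epsilon_spec hα⟩
  refine ⟨fun α => j (pt α), fun α hα β hβ h => by_contra fun hne => ?_⟩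
  exact disjoint_left.1 (hdisj hne) (hpt α hα).2 (j.injective h ▸ (hpt β hβ).2)

theorem exists_perfect_indicesMeeting_subsingleton (hdisj : Pairwise (Disjoint on A))
    (hdec : ∀ Y, PerfectlyDecided A Y) {C : Set ℝ} (hC : Perfect C) (hne : C.Nonempty)
    (hlink : ∀ Q ∈ perfectSubsets C, ∀ Q' ∈ perfectSubsets C,
      ¬Disjoint (indicesMeeting A Q) (indicesMeeting A Q')) :
    ∃ R ∈ perfectSubsets C, (indicesMeeting A R).Subsingleton := by
  obtain ⟨code, hcode⟩ := exists_injOn_indicesMeeting hdisj C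
  -- at level `n`, pass to a dense set of indices on which the `n`-th bit of the code is constant
  have hbit : ∀ n, ∃ Z : Set Λ, DenselyIndexed A C Z ∧ ∀ α ∈ Z, ∀ β ∈ Z, code α n = code β n := by
    intro n
    rcases denselyIndexed_or_compl (hdec {α | code α n}) hlink with h | h
    · exact ⟨_, h, fun α hα β hβ => hα.trans hβ.symm⟩
    · exact ⟨_, h, fun α hα β hβ => (eq_false_of_ne_true hα).trans (eq_false_of_ne_true hβ).symm⟩
  choose Z hZ hZcode using hbit
  obtain ⟨R, hR, hRZ, -⟩ := hC.exists_fusion hne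
    (Rel := fun n D₀ D₁ => indicesMeeting A D₀ ⊆ Z n ∧ indicesMeeting A D₁ ⊆ Z n)
    (fun _ _ _ _ _ h₀ h₁ h => ⟨(indicesMeeting_mono h₀).trans h.1,
      (indicesMeeting_mono h₁).trans h.2⟩)
    fun n D hD => by
      obtain ⟨E₀, E₁, hE₀, hE₁, hE⟩ := hD.1.splitting hD.2.1
      obtain ⟨D₀, hD₀, hD₀Z⟩ := hZ n E₀ (perfectSubsets_mono hD.2.2 hE₀)
      obtain ⟨D₁, hD₁, hD₁Z⟩ := hZ n E₁ (perfectSubsets_mono hD.2.2 hE₁)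
      exact ⟨D₀, perfectSubsets_mono hE₀.2.2 hD₀, D₁, perfectSubsets_mono hE₁.2.2 hD₁,
        hE.mono hD₀.2.2 hD₁.2.2, hD₀Z, hD₁Z⟩
  have hRZ' : ∀ n, indicesMeeting A R ⊆ Z n := by
    rintro n α ⟨x, hxR, hxA⟩
    obtain ⟨D₀, D₁, hrel, hx | hx⟩ := hRZ x hxR n
    exacts [hrel.1 ⟨x, hx, hxA⟩, hrel.2 ⟨x, hx, hxA⟩]
  refine ⟨R, hR, fun α hα β hβ => hcode (indicesMeeting_mono hR.2.2 hα)
    (indicesMeeting_mono hR.2.2 hβ) (funext fun n => hZcode n α (hRZ' n hα) β (hRZ' n hβ))⟩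

theorem exists_perfect_pair_disjoint_indicesMeeting (hdisj : Pairwise (Disjoint on A))
    (hnull : ∀ α, MarczewskiNull (A α)) (hdec : ∀ Y, PerfectlyDecided A Y) {C : Set ℝ}
    (hC : Perfect C) (hne : C.Nonempty)
    (hmeet : ∀ Q ∈ perfectSubsets C, (indicesMeeting A Q).Nonempty) :
    ∃ Q ∈ perfectSubsets C, ∃ Q' ∈ perfectSubsets C,
      Disjoint (indicesMeeting A Q) (indicesMeeting A Q') := by
  by_contra! hlink
  obtain ⟨R, hR, hsub⟩ := exists_perfect_indicesMeeting_subsingleton hdisj hdec hC hne hlink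
  exact (indicesMeeting_nontrivial hnull hR.1 hR.2.1
    fun Q hQ => hmeet Q (perfectSubsets_mono hR.2.2 hQ)).not_subsingleton hsub

theorem exists_perfect_transversal {C : Set ℝ} (hC : Perfect C) (hne : C.Nonempty)
    (hmeet : ∀ Q ∈ perfectSubsets C, (indicesMeeting A Q).Nonempty)
    (hpair : ∀ D ∈ perfectSubsets C, ∃ Q ∈ perfectSubsets D, ∃ Q' ∈ perfectSubsets D,
      Disjoint (indicesMeeting A Q) (indicesMeeting A Q')) :
    ∃ R ∈ perfectSubsets C, ∀ α, (R ∩ A α).Subsingleton := by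
  obtain ⟨R, hR, -, hsep⟩ := hC.exists_fusion hne
    (Rel := fun _ D₀ D₁ => Disjoint (indicesMeeting A D₀) (indicesMeeting A D₁))
    (fun _ _ _ _ _ h₀ h₁ h => h.mono (indicesMeeting_mono h₀) (indicesMeeting_mono h₁))
    fun _ D hD => by
      obtain ⟨Q, hQ, Q', hQ', hdisj⟩ := hpair D hD
      have hQQ' : ¬Q ⊆ Q' := fun h => by
        obtain ⟨α, hα⟩ := hmeet Q (perfectSubsets_mono hD.2.2 hQ)
        exact disjoint_left.1 hdisj hα (indicesMeeting_mono h hα)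
      obtain ⟨Q₀, hQ₀, hQ₀Q'⟩ := hQ.1.exists_perfect_disjoint_of_not_subset hQ'.1.closed hQQ'
      exact ⟨Q₀, perfectSubsets_mono hQ.2.2 hQ₀, Q', hQ', hQ₀Q',
        hdisj.mono_left (indicesMeeting_mono hQ₀.2.2)⟩
  refine ⟨R, hR, fun α x hx y hy => by_contra fun hxy => ?_⟩
  obtain ⟨n, D₀, D₁, hrel, ⟨hx₀, hy₁⟩ | ⟨hy₀, hx₁⟩⟩ := hsep x hx.1 y hy.1 hxy
  · exact disjoint_left.1 hrel ⟨x, hx₀, hx.2⟩ ⟨y, hy₁, hy.2⟩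
  · exact disjoint_left.1 hrel ⟨y, hy₀, hy.2⟩ ⟨x, hx₁, hx.2⟩

theorem continuum_le_mk_inter_iUnion {Q : Set ℝ} (hQ : Perfect Q) (hne : Q.Nonempty)
    (hmeet : ∀ Q' ∈ perfectSubsets Q, (indicesMeeting A Q').Nonempty) :
    𝔠 ≤ #↥(Q ∩ ⋃ α, A α) := by
  by_contra! hlt
  obtain ⟨Q', hQ', hdisj⟩ := hQ.exists_perfect_disjoint_of_mk_lt hne hlt
  obtain ⟨α, x, hxQ', hxA⟩ := hmeet Q' hQ'
  exact disjoint_left.1 hdisj hxQ' ⟨hQ'.2.2 hxQ', mem_iUnion_of_mem α hxA⟩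

theorem exists_not_perfectlyDecided {R : Set ℝ} (hR : Perfect R) (hne : R.Nonempty)
    (hmeet : ∀ Q ∈ perfectSubsets R, (indicesMeeting A Q).Nonempty)
    (htrans : ∀ α, (R ∩ A α).Subsingleton) : ∃ Y : Set Λ, ¬PerfectlyDecided A Y := by
  have hcard : #(Bool × perfectSubsets R) ≤ 𝔠 := by
    rw [mk_prod, lift_id, lift_id, mk_bool]
    exact mul_le_of_le aleph0_le_continuum (nat_lt_continuum 2).le
      ((mk_le_mk_of_subset fun _ hQ => hQ.1.closed).trans Real.mk_isClosed_le_continuum)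
  -- Bernstein: `g (false, Q)` and `g (true, Q)` are distinct points of the union in `Q`
  obtain ⟨g, hg, hgQ⟩ := Cardinal.exists_injective_mem
    (fun i : Bool × perfectSubsets R => (i.2 : Set ℝ) ∩ ⋃ α, A α)
    fun i => hcard.trans (continuum_le_mk_inter_iUnion i.2.2.1 i.2.2.2.1
      fun Q' hQ' => hmeet Q' (perfectSubsets_mono i.2.2.2.2 hQ'))
  refine ⟨indicesMeeting A (range fun Q => g (false, Q)), fun hdec => ?_⟩
  obtain ⟨Q, hQ, hQY | hQY⟩ := hdec R hR hne
  · obtain ⟨hyQ, hyU⟩ := hgQ (true, ⟨Q, hQ⟩)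
    obtain ⟨β, hβ⟩ := mem_iUnion.1 hyU
    -- the index of `g (true, Q)` is that of some `g (false, Q')`, and both points lie in `R`
    obtain ⟨_, ⟨Q', rfl⟩, hβ'⟩ := hQY ⟨_, hyQ, hβ⟩
    have := hg (htrans β ⟨Q'.2.2.2 (hgQ (false, Q')).1, hβ'⟩ ⟨hQ.2.2 hyQ, hβ⟩)
    exact Bool.false_ne_true (congrArg Prod.fst this)
  · obtain ⟨hxQ, hxU⟩ := hgQ (false, ⟨Q, hQ⟩)
    obtain ⟨α, hα⟩ := mem_iUnion.1 hxU
    exact hQY ⟨_, hxQ, hα⟩ ⟨_, ⟨⟨Q, hQ⟩, rfl⟩, hα⟩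

end Marczewski

theorem stmt17 {Λ : Type*} (A : Λ → Set ℝ)
    (hdisj : Pairwise (Function.onFun Disjoint A))
    (hnull : ∀ α, MarczewskiNull (A α))
    (hU : ¬ MarczewskiNull (⋃ α, A α)) :
    ∃ Λ₀ Λ₁ : Set Λ, Disjoint Λ₀ Λ₁ ∧ Λ₀ ∪ Λ₁ = Set.univ ∧
      ¬ ∃ E : Set ℝ, MarczewskiMeasurable E ∧
        (⋃ α ∈ Λ₀, A α) ⊆ E ∧ E ∩ (⋃ α ∈ Λ₁, A α) = ∅ := by
  by_contra! hsep
  have hdec : ∀ Y : Set Λ, PerfectlyDecided A Y := fun Y => by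
    obtain ⟨E, hE, hY, hYc⟩ := hsep Y Yᶜ disjoint_compl_right (union_compl_self Y)
    exact hE.perfectlyDecided hY hYc
  obtain ⟨P, hP, hPne, hPmeet⟩ := exists_perfect_forall_indicesMeeting_nonempty hU
  obtain ⟨R, ⟨hR, hRne, hRP⟩, htrans⟩ := exists_perfect_transversal hP hPne hPmeet
    fun D hD => exists_perfect_pair_disjoint_indicesMeeting hdisj hnull hdec hD.1 hD.2.1
      fun Q hQ => hPmeet Q (perfectSubsets_mono hD.2.2 hQ)
  obtain ⟨Y, hY⟩ := exists_not_perfectlyDecided hR hRne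
    (fun Q hQ => hPmeet Q (perfectSubsets_mono hRP hQ)) htrans
  exact hY (hdec Y)
end

section
/- Let B ⊆ ℝ be a set that is not Marczewski null, witnessed by a perfect set P such that every perfect subset of P meets B. Suppose B = ⋃_{α∈Λ} A_α is a union of at least two pairwise disjoint nonempty s₀-sets. Then Λ can be split into disjoint nonempty subfamilies Λ₀, Λ₁ and there exist disjoint perfect sets P₀, P₁ ⊆ P such that every perfect subset of P₀ meets ⋃_{α∈Λ₀} A_α and every perfect subset of P₁ meets ⋃_{α∈Λ₁} A_α. -/
/-!
Suppose there is no such splitting, and split `P` into disjoint perfect sets `P₀` and `P₁`.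
Call `S ⊆ Λ` small if `⋃ α ∈ S, A α` is Marczewski null relative to `P₀`. If neither `S` nor
`Sᶜ` were small, then, since `B` is not null relative to `P₁`, one of them would be abundant
everywhere in a perfect subset of `P₀` and the other in a perfect subset of `P₁`: a splitting.
So the sets with small complement form an ultrafilter on `Λ`, and by fusion it is closed under
countable intersections. Choosing a point of each `A α` injects `Λ` into `ℝ`, where countably
many open sets separate points, so this ultrafilter contains a subsingleton `{α}`. As `A α` is
`s₀`, the whole of `B` is then null relative to `P₀`, although `B` is abundant everywhere in `P`.
-/

open Set Filter Function Topology CantorScheme PiNat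
open scoped ENNReal

section Topological

variable {α : Type*} [TopologicalSpace α] {P Q S T : Set α}

def MarczewskiNullWithin (P S : Set α) : Prop :=
  ∀ Q ⊆ P, Perfect Q → Q.Nonempty → ∃ R ⊆ Q, Perfect R ∧ R.Nonempty ∧ Disjoint R S

def AbundantEverywhereIn (S P : Set α) : Prop :=
  ∀ Q ⊆ P, Perfect Q → Q.Nonempty → (Q ∩ S).Nonempty

theorem marczewskiNullWithin_empty : MarczewskiNullWithin P (∅ : Set α) :=
  fun Q _ hQ hQne => ⟨Q, subset_rfl, hQ, hQne, disjoint_empty _⟩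

theorem MarczewskiNullWithin.mono_left (h : MarczewskiNullWithin P S) (hQP : Q ⊆ P) :
    MarczewskiNullWithin Q S :=
  fun R hRQ => h R (hRQ.trans hQP)

theorem MarczewskiNullWithin.mono_right (h : MarczewskiNullWithin P S) (hTS : T ⊆ S) :
    MarczewskiNullWithin P T := by
  intro Q hQP hQ hQne
  obtain ⟨R, hRQ, hR, hRne, hRS⟩ := h Q hQP hQ hQne
  exact ⟨R, hRQ, hR, hRne, hRS.mono_right hTS⟩

theorem MarczewskiNullWithin.union (hS : MarczewskiNullWithin P S)
    (hT : MarczewskiNullWithin P T) : MarczewskiNullWithin P (S ∪ T) := by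
  intro Q hQP hQ hQne
  obtain ⟨R, hRQ, hR, hRne, hRS⟩ := hS Q hQP hQ hQne
  obtain ⟨R', hR'R, hR', hR'ne, hR'T⟩ := hT R (hRQ.trans hQP) hR hRne
  exact ⟨R', hR'R.trans hRQ, hR', hR'ne, disjoint_union_right.2 ⟨hRS.mono_left hR'R, hR'T⟩⟩

theorem AbundantEverywhereIn.mono (h : AbundantEverywhereIn S P) (hQP : Q ⊆ P) :
    AbundantEverywhereIn S Q :=
  fun R hRQ => h R (hRQ.trans hQP)

theorem AbundantEverywhereIn.nonempty (h : AbundantEverywhereIn S P) (hP : Perfect P)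
    (hPne : P.Nonempty) : S.Nonempty :=
  (h P subset_rfl hP hPne).mono inter_subset_right

theorem AbundantEverywhereIn.not_marczewskiNullWithin (h : AbundantEverywhereIn S P)
    (hP : Perfect P) (hPne : P.Nonempty) : ¬ MarczewskiNullWithin P S := by
  intro hnull
  obtain ⟨R, hRP, hR, hRne, hRS⟩ := hnull P subset_rfl hP hPne
  exact not_disjoint_iff_nonempty_inter.2 (h R hRP hR hRne) hRS

theorem exists_abundantEverywhereIn_of_not_marczewskiNullWithin
    (h : ¬ MarczewskiNullWithin P S) :
    ∃ Q ⊆ P, Perfect Q ∧ Q.Nonempty ∧ AbundantEverywhereIn S Q := by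
  simp only [MarczewskiNullWithin, not_forall, not_exists, not_and] at h
  obtain ⟨Q, hQP, hQ, hQne, hQS⟩ := h
  exact ⟨Q, hQP, hQ, hQne, fun R hRQ hR hRne =>
    not_disjoint_iff_nonempty_inter.1 (hQS R hRQ hR hRne)⟩

end Topological

theorem MarczewskiNull.marczewskiNullWithin {S : Set ℝ} (h : MarczewskiNull S) (P : Set ℝ) :
    MarczewskiNullWithin P S := by
  intro Q _ hQ hQne
  obtain ⟨R, hRQ, hR, hRne, hRS⟩ := h Q hQ hQne
  exact ⟨R, hRQ, hR, hRne, disjoint_iff_inter_eq_empty.2 hRS⟩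

theorem Continuous.perfect_range_of_injective {X : Type*} [TopologicalSpace X] [T2Space X]
    {f : (ℕ → Bool) → X} (hf : Continuous f) (hinj : Injective f) : Perfect (range f) := by
  refine ⟨(isCompact_range hf).isClosed, ?_⟩
  rintro _ ⟨c, rfl⟩
  rw [accPt_iff_frequently]
  have hflip : Tendsto (fun k => Function.update c k (!c k)) atTop (𝓝 c) :=
    tendsto_pi_nhds.2 fun i => tendsto_const_nhds.congr'
      ((eventually_gt_atTop i).mono fun k hk => (update_of_ne hk.ne _ c).symm)
  refine ((hf.tendsto c).comp hflip).frequently <|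
    Frequently.of_forall fun k => ⟨hinj.ne fun h => ?_, mem_range_self _⟩
  simpa using congr_fun h k

section Fusion

variable {α : Type*} [MetricSpace α] {P Q R S : Set α}

theorem MarczewskiNullWithin.exists_split (h : MarczewskiNullWithin P S) (hR : Perfect R)
    (hRne : R.Nonempty) (hRP : R ⊆ P) {ε : ℝ≥0∞} (hε : 0 < ε) :
    ∃ R' : Bool → Set α, (∀ b, Perfect (R' b) ∧ (R' b).Nonempty ∧ R' b ⊆ R ∧
      Metric.ediam (R' b) ≤ ε ∧ Disjoint (R' b) S) ∧ Disjoint (R' false) (R' true) := by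
  obtain ⟨R₀, hR₀R, hR₀, hR₀ne, hR₀S⟩ := h R hRP hR hRne
  obtain ⟨D₀, D₁, ⟨hD₀, hD₀ne, hD₀R, hD₀ε⟩, ⟨hD₁, hD₁ne, hD₁R, hD₁ε⟩, hD⟩ :=
    hR₀.small_diam_splitting hR₀ne hε
  refine ⟨fun b => cond b D₁ D₀, fun b => ?_, hD⟩
  cases b
  · exact ⟨hD₀, hD₀ne, hD₀R.trans hR₀R, hD₀ε, hR₀S.mono_left hD₀R⟩
  · exact ⟨hD₁, hD₁ne, hD₁R.trans hR₀R, hD₁ε, hR₀S.mono_left hD₁R⟩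

theorem Perfect.exists_nat_bool_injection_disjoint [CompleteSpace α] {C : ℕ → Set α}
    (hQ : Perfect Q) (hQne : Q.Nonempty) (hC : ∀ n, MarczewskiNullWithin Q (C n)) :
    ∃ f : (ℕ → Bool) → α, Continuous f ∧ Injective f ∧ range f ⊆ Q ∧
      ∀ n, Disjoint (range f) (C n) := by
  choose! split hsplit hsplit_disj using fun n (R : Set α) (hR : Perfect R)
    (hRne : R.Nonempty) (hRQ : R ⊆ Q) =>
    (hC n).exists_split hR hRne hRQ (ENNReal.inv_pos.2 (ENNReal.natCast_ne_top (n + 1)))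
  -- Level `n + 1` of the scheme avoids `C n`; level `n` has diameter at most `n⁻¹`
  -- (which is `⊤` at the root).
  let D : List Bool → Set α := List.rec Q fun b l R => split l.length R b
  have hD : ∀ l, Perfect (D l) ∧ (D l).Nonempty ∧ D l ⊆ Q ∧
      Metric.ediam (D l) ≤ (l.length : ℝ≥0∞)⁻¹ := by
    intro l
    induction l with
    | nil => exact ⟨hQ, hQne, subset_rfl, by simp⟩
    | cons b l ih =>
      obtain ⟨hperf, hne, hsub, hdiam, -⟩ := hsplit l.length (D l) ih.1 ih.2.1 ih.2.2.1 b
      exact ⟨hperf, hne, hsub.trans ih.2.2.1, by simpa using hdiam⟩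
  have hchild (l : List Bool) := hsplit l.length (D l) (hD l).1 (hD l).2.1 (hD l).2.2.1
  have hanti : ClosureAntitone D :=
    Antitone.closureAntitone (fun l b => (hchild l b).2.2.1) fun l => (hD l).1.closed
  have hvanish : VanishingDiam D := fun x =>
    tendsto_of_tendsto_of_tendsto_of_le_of_le tendsto_const_nhds
      ENNReal.tendsto_inv_nat_nhds_zero (fun _ => bot_le)
      fun n => by simpa only [res_length] using (hD (res x n)).2.2.2
  have hdisj : CantorScheme.Disjoint D := by
    rintro l (_ | _) (_ | _) hne
    · exact absurd rfl hne
    · exact hsplit_disj l.length (D l) (hD l).1 (hD l).2.1 (hD l).2.2.1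
    · exact (hsplit_disj l.length (D l) (hD l).1 (hD l).2.1 (hD l).2.2.1).symm
    · exact absurd rfl hne
  have hdom : (inducedMap D).1 = univ := hanti.map_of_vanishingDiam hvanish fun l => (hD l).2.1
  let f : (ℕ → Bool) → α := fun x => (inducedMap D).2 ⟨x, hdom ▸ mem_univ x⟩
  refine ⟨f, hvanish.map_continuous.comp (by fun_prop), ?_, ?_, ?_⟩
  · intro x y hxy
    simpa using hdisj.map_injective hxy
  · rintro _ ⟨x, rfl⟩
    exact (hD []).2.2.1 (map_mem _ 0)
  · intro n
    refine disjoint_left.2 ?_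
    rintro _ ⟨x, rfl⟩
    have hmem := map_mem ⟨x, hdom ▸ mem_univ x⟩ (n + 1)
    rw [res_succ] at hmem
    rw [← res_length x n]
    exact disjoint_left.1 (hchild (res x n) (x n)).2.2.2.2 hmem

theorem marczewskiNullWithin_iUnion [CompleteSpace α] {ι : Sort*} [Countable ι] {C : ι → Set α}
    (h : ∀ i, MarczewskiNullWithin P (C i)) : MarczewskiNullWithin P (⋃ i, C i) := by
  intro Q hQP hQ hQne
  cases isEmpty_or_nonempty ι
  · exact ⟨Q, subset_rfl, hQ, hQne, by simp⟩
  obtain ⟨e, he⟩ := exists_surjective_nat ι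
  obtain ⟨f, hf, hinj, hfQ, hfC⟩ :=
    hQ.exists_nat_bool_injection_disjoint hQne fun n => (h (e n)).mono_left hQP
  refine ⟨range f, hfQ, hf.perfect_range_of_injective hinj, range_nonempty f, ?_⟩
  rw [← he.iUnion_comp, disjoint_iUnion_right]
  exact hfC

end Fusion

section Partition

variable {α Λ : Type*} {A : Λ → Set α}

theorem iUnion_eq_biUnion_union_biUnion_compl (A : Λ → Set α) (S : Set Λ) :
    ⋃ i, A i = (⋃ i ∈ S, A i) ∪ ⋃ i ∈ Sᶜ, A i := by
  rw [← biUnion_union, union_compl_self, biUnion_univ]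

theorem marczewskiNullWithin_iUnion_of_forall_or [MetricSpace α] [CompleteSpace α]
    [SecondCountableTopology α] {P : Set α} (hdisj : Pairwise (Disjoint on A))
    (hne : ∀ i, (A i).Nonempty) (hnull : ∀ i, MarczewskiNullWithin P (A i))
    (hdich : ∀ S : Set Λ,
      MarczewskiNullWithin P (⋃ i ∈ S, A i) ∨ MarczewskiNullWithin P (⋃ i ∈ Sᶜ, A i)) :
    MarczewskiNullWithin P (⋃ i, A i) := by
  let l : Filter Λ := .ofCountableUnion {S | MarczewskiNullWithin P (⋃ i ∈ S, A i)}
    (fun 𝒮 h𝒮 hnull => by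
      have := h𝒮.to_subtype
      rw [mem_ofPred_eq, sUnion_eq_iUnion, biUnion_iUnion]
      exact marczewskiNullWithin_iUnion fun S => hnull S S.2)
    fun _ hT _ hST => hT.mono_right (biUnion_subset_biUnion_left hST)
  choose x hx using hne
  obtain ⟨s, hs, hsl⟩ := exists_subsingleton_mem_of_forall_separating (l := map x l) IsOpen
    fun U _ => by simpa [l, or_comm] using hdich (x ⁻¹' U)
  have hfiber : (x ⁻¹' s).Subsingleton := fun i hi j hj =>
    hdisj.eq (not_disjoint_iff.2 ⟨x i, hx i, hs hi hj ▸ hx j⟩)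
  rw [iUnion_eq_biUnion_union_biUnion_compl A (x ⁻¹' s)]
  refine .union ?_ hsl
  rcases hfiber.eq_empty_or_singleton with hempty | ⟨i, hi⟩
  · simpa [hempty] using marczewskiNullWithin_empty
  · simpa [hi] using hnull i

theorem exists_abundantEverywhereIn_split [TopologicalSpace α] {P₀ P₁ : Set α}
    (hP₁ : Perfect P₁) (hP₁ne : P₁.Nonempty) (habund : AbundantEverywhereIn (⋃ i, A i) P₁)
    {S : Set Λ} (hS : ¬ MarczewskiNullWithin P₀ (⋃ i ∈ S, A i))
    (hSc : ¬ MarczewskiNullWithin P₀ (⋃ i ∈ Sᶜ, A i)) :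
    ∃ T : Set Λ, ∃ Q₀ ⊆ P₀, ∃ Q₁ ⊆ P₁, Perfect Q₀ ∧ Q₀.Nonempty ∧ Perfect Q₁ ∧ Q₁.Nonempty ∧
      AbundantEverywhereIn (⋃ i ∈ T, A i) Q₀ ∧ AbundantEverywhereIn (⋃ i ∈ Tᶜ, A i) Q₁ := by
  have hsplit (T : Set Λ) (h₀ : ¬ MarczewskiNullWithin P₀ (⋃ i ∈ T, A i))
      (h₁ : ¬ MarczewskiNullWithin P₁ (⋃ i ∈ Tᶜ, A i)) :
      ∃ Q₀ ⊆ P₀, ∃ Q₁ ⊆ P₁, Perfect Q₀ ∧ Q₀.Nonempty ∧ Perfect Q₁ ∧ Q₁.Nonempty ∧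
        AbundantEverywhereIn (⋃ i ∈ T, A i) Q₀ ∧ AbundantEverywhereIn (⋃ i ∈ Tᶜ, A i) Q₁ := by
    obtain ⟨Q₀, hQ₀P, hQ₀, hQ₀ne, hQ₀T⟩ :=
      exists_abundantEverywhereIn_of_not_marczewskiNullWithin h₀
    obtain ⟨Q₁, hQ₁P, hQ₁, hQ₁ne, hQ₁T⟩ :=
      exists_abundantEverywhereIn_of_not_marczewskiNullWithin h₁
    exact ⟨Q₀, hQ₀P, Q₁, hQ₁P, hQ₀, hQ₀ne, hQ₁, hQ₁ne, hQ₀T, hQ₁T⟩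
  by_cases hSc₁ : MarczewskiNullWithin P₁ (⋃ i ∈ Sᶜ, A i)
  · refine ⟨Sᶜ, hsplit Sᶜ hSc ?_⟩
    rw [compl_compl]
    intro hS₁
    refine habund.not_marczewskiNullWithin hP₁ hP₁ne ?_
    rw [iUnion_eq_biUnion_union_biUnion_compl A S]
    exact hS₁.union hSc₁
  · exact ⟨S, hsplit S hS hSc₁⟩

end Partition

theorem stmt18_general {Λ : Type*} (A : Λ → Set ℝ) (B P : Set ℝ)
    (hB : B = ⋃ α, A α)
    (hP : Perfect P) (hPne : P.Nonempty)
    (hwitness : ∀ Q : Set ℝ, Q ⊆ P → Perfect Q → Q.Nonempty → (Q ∩ B).Nonempty)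
    (hdisj : Pairwise (Function.onFun Disjoint A))
    (hne : ∀ α, (A α).Nonempty)
    (hnull : ∀ α, MarczewskiNull (A α)) :
    ∃ Λ₀ Λ₁ : Set Λ, Disjoint Λ₀ Λ₁ ∧ Λ₀ ∪ Λ₁ = Set.univ ∧
      Λ₀.Nonempty ∧ Λ₁.Nonempty ∧
      ∃ P₀ P₁ : Set ℝ, Disjoint P₀ P₁ ∧ P₀ ⊆ P ∧ P₁ ⊆ P ∧
        Perfect P₀ ∧ P₀.Nonempty ∧ Perfect P₁ ∧ P₁.Nonempty ∧
        (∀ Q : Set ℝ, Q ⊆ P₀ → Perfect Q → Q.Nonempty → (Q ∩ ⋃ α ∈ Λ₀, A α).Nonempty) ∧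
        (∀ Q : Set ℝ, Q ⊆ P₁ → Perfect Q → Q.Nonempty → (Q ∩ ⋃ α ∈ Λ₁, A α).Nonempty) := by
  subst hB
  have habund : AbundantEverywhereIn (⋃ i, A i) P := hwitness
  obtain ⟨P₀, P₁, ⟨hP₀, hP₀ne, hP₀P⟩, ⟨hP₁, hP₁ne, hP₁P⟩, hP₀₁⟩ := hP.splitting hPne
  obtain ⟨S, hS, hSc⟩ : ∃ S : Set Λ, ¬ MarczewskiNullWithin P₀ (⋃ i ∈ S, A i) ∧
      ¬ MarczewskiNullWithin P₀ (⋃ i ∈ Sᶜ, A i) := by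
    by_contra! h
    refine (habund.mono hP₀P).not_marczewskiNullWithin hP₀ hP₀ne ?_
    exact marczewskiNullWithin_iUnion_of_forall_or hdisj hne
      (fun i => (hnull i).marczewskiNullWithin P₀) fun S => or_iff_not_imp_left.2 (h S)
  obtain ⟨T, Q₀, hQ₀P, Q₁, hQ₁P, hQ₀, hQ₀ne, hQ₁, hQ₁ne, hQ₀T, hQ₁T⟩ :=
    exists_abundantEverywhereIn_split hP₁ hP₁ne (habund.mono hP₁P) hS hSc
  have hT : T.Nonempty := (nonempty_biUnion.1 (hQ₀T.nonempty hQ₀ hQ₀ne)).imp fun _ h => h.1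
  have hTc : Tᶜ.Nonempty := (nonempty_biUnion.1 (hQ₁T.nonempty hQ₁ hQ₁ne)).imp fun _ h => h.1
  exact ⟨T, Tᶜ, disjoint_compl_right, union_compl_self T, hT, hTc, Q₀, Q₁,
    hP₀₁.mono hQ₀P hQ₁P, hQ₀P.trans hP₀P, hQ₁P.trans hP₁P, hQ₀, hQ₀ne, hQ₁, hQ₁ne, hQ₀T, hQ₁T⟩

theorem stmt18 {Λ : Type*} (A : Λ → Set ℝ) (B P : Set ℝ)
    (hB : B = ⋃ α, A α)
    (hP : Perfect P) (hPne : P.Nonempty)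
    (hwitness : ∀ Q : Set ℝ, Q ⊆ P → Perfect Q → Q.Nonempty → (Q ∩ B).Nonempty)
    (hdisj : Pairwise (Function.onFun Disjoint A))
    (hne : ∀ α, (A α).Nonempty)
    (hnull : ∀ α, MarczewskiNull (A α))
    (htwo : ∃ α β : Λ, α ≠ β) :
    ∃ Λ₀ Λ₁ : Set Λ, Disjoint Λ₀ Λ₁ ∧ Λ₀ ∪ Λ₁ = Set.univ ∧
      Λ₀.Nonempty ∧ Λ₁.Nonempty ∧
      ∃ P₀ P₁ : Set ℝ, Disjoint P₀ P₁ ∧ P₀ ⊆ P ∧ P₁ ⊆ P ∧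
        Perfect P₀ ∧ P₀.Nonempty ∧ Perfect P₁ ∧ P₁.Nonempty ∧
        (∀ Q : Set ℝ, Q ⊆ P₀ → Perfect Q → Q.Nonempty → (Q ∩ ⋃ α ∈ Λ₀, A α).Nonempty) ∧
        (∀ Q : Set ℝ, Q ⊆ P₁ → Perfect Q → Q.Nonempty → (Q ∩ ⋃ α ∈ Λ₁, A α).Nonempty) :=
  stmt18_general A B P hB hP hPne hwitness hdisj hne hnull
end
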